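/- Let M be a symmetric positive-definite real n×n matrix with decomposition M = CᵀC, C invertible. Let f : ℝⁿ → ℝⁿ be continuously differentiable, and let x₀, y₀ ∈ ℝⁿ. Then there exists ω ∈ [0,1] such that, setting ξ = ω·x₀ + (1−ω)·y₀, one has ‖f(x₀) − f(y₀)‖_M ≤ sqrt(λ_max((Cᵀ)⁻¹·Df(ξ)ᵀ·M·Df(ξ)·C⁻¹)) · ‖x₀ − y₀‖_M. -/

import Mathlib

/-!
The vector-valued mean value theorem fails as an equality, so test the increment against the
single functional `z ↦ ⟪C (f x₀ - f y₀), C z⟫`: the scalar mean value theorem yields a point `ξ`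
of the segment with `‖u‖² = ⟪u, A w⟫`, where `u = C (f x₀ - f y₀)`, `w = C (x₀ - y₀)` and
`A = C Df(ξ) C⁻¹`. Cauchy–Schwarz gives `‖u‖ ≤ ‖A w‖`, and the Rayleigh bound
`‖A w‖² ≤ λ_max(AᵀA) ‖w‖²` concludes, because `‖y‖_M = ‖C y‖` and
`AᵀA = (Cᵀ)⁻¹ Df(ξ)ᵀ M Df(ξ) C⁻¹`.
-/

open Matrix

/-- Largest eigenvalue of a real matrix, as the supremum of its real spectrum. -/
noncomputable def lambdaMax {n : ℕ} (S : Matrix (Fin n) (Fin n) ℝ) : ℝ :=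
  sSup (spectrum ℝ S)

/-- Weighted `M`-norm of a vector: `‖y‖_M = sqrt (yᵀ M y)`. -/
noncomputable def Mnorm {n : ℕ} (M : Matrix (Fin n) (Fin n) ℝ) (y : Fin n → ℝ) : ℝ :=
  Real.sqrt (y ⬝ᵥ (M *ᵥ y))

/-- Closed ball of radius `δ` about `x` in the `M`-norm. -/
def Mball {n : ℕ} (M : Matrix (Fin n) (Fin n) ℝ) (x : Fin n → ℝ) (δ : ℝ) :
    Set (Fin n → ℝ) :=
  {y | Mnorm M (y - x) ≤ δ}

/-- Jacobian matrix of `f : ℝⁿ → ℝⁿ` at `x`. -/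
noncomputable def jacobian {n : ℕ} (f : (Fin n → ℝ) → (Fin n → ℝ)) (x : Fin n → ℝ) :
    Matrix (Fin n) (Fin n) ℝ :=
  LinearMap.toMatrix' (fderiv ℝ f x).toLinearMap

section DotProduct

variable {ι : Type*} [Fintype ι]

theorem dotProduct_le_sqrt_mul_sqrt (x y : ι → ℝ) :
    x ⬝ᵥ y ≤ √(x ⬝ᵥ x) * √(y ⬝ᵥ y) := by
  simpa [dotProduct, pow_two] using Real.sum_mul_le_sqrt_mul_sqrt Finset.univ x y

theorem sqrt_dotProduct_self_le_of_dotProduct_self_le {u z : ι → ℝ} (h : u ⬝ᵥ u ≤ u ⬝ᵥ z) :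
    √(u ⬝ᵥ u) ≤ √(z ⬝ᵥ z) := by
  have hu : √(u ⬝ᵥ u) * √(u ⬝ᵥ u) ≤ √(u ⬝ᵥ u) * √(z ⬝ᵥ z) := by
    rw [Real.mul_self_sqrt (by simpa using dotProduct_self_star_nonneg u)]
    exact h.trans (dotProduct_le_sqrt_mul_sqrt u z)
  nlinarith [Real.sqrt_nonneg (u ⬝ᵥ u), Real.sqrt_nonneg (z ⬝ᵥ z)]

open scoped MatrixOrder in
theorem Matrix.IsHermitian.dotProduct_mulVec_le_sSup_spectrum_mul [DecidableEq ι]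
    {S : Matrix ι ι ℝ} (hS : S.IsHermitian) (w : ι → ℝ) :
    w ⬝ᵥ (S *ᵥ w) ≤ sSup (spectrum ℝ S) * (w ⬝ᵥ w) := by
  have hle : S ≤ algebraMap ℝ (Matrix ι ι ℝ) (sSup (spectrum ℝ S)) :=
    le_algebraMap_of_spectrum_le (fun _ hx => le_csSup finite_real_spectrum.bddAbove hx)
      hS.isSelfAdjoint
  have := (le_iff.mp hle).dotProduct_mulVec_nonneg w
  rw [sub_mulVec, dotProduct_sub, Algebra.algebraMap_eq_smul_one, smul_mulVec, one_mulVec,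
    dotProduct_smul, star_trivial, smul_eq_mul] at this
  linarith

end DotProduct

theorem sqrt_dotProduct_mulVec_self_le {n : ℕ} (A : Matrix (Fin n) (Fin n) ℝ) (w : Fin n → ℝ) :
    √((A *ᵥ w) ⬝ᵥ (A *ᵥ w)) ≤ √(lambdaMax (Aᵀ * A)) * √(w ⬝ᵥ w) := by
  have hAA : (Aᵀ * A).IsHermitian := by
    simpa only [conjTranspose_eq_transpose_of_trivial] using isHermitian_conjTranspose_mul_self A
  rw [← Real.sqrt_mul' _ (by simpa using dotProduct_self_star_nonneg w)]
  refine Real.sqrt_le_sqrt ?_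
  have hquad : (A *ᵥ w) ⬝ᵥ (A *ᵥ w) = w ⬝ᵥ ((Aᵀ * A) *ᵥ w) := by
    rw [← mulVec_mulVec, dotProduct_mulVec w, vecMul_transpose]
  rw [hquad]
  exact hAA.dotProduct_mulVec_le_sSup_spectrum_mul w

theorem Mnorm_eq_sqrt_dotProduct_mulVec {n : ℕ} {M C : Matrix (Fin n) (Fin n) ℝ}
    (hCM : Cᵀ * C = M) (z : Fin n → ℝ) :
    Mnorm M z = √((C *ᵥ z) ⬝ᵥ (C *ᵥ z)) := by
  rw [Mnorm, ← hCM, ← mulVec_mulVec, dotProduct_mulVec, vecMul_transpose]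

theorem transpose_inv_mul_transpose_mul_mul_mul_inv {ι R : Type*} [Fintype ι] [DecidableEq ι]
    [CommRing R] (C J : Matrix ι ι R) :
    (Cᵀ)⁻¹ * Jᵀ * (Cᵀ * C) * J * C⁻¹ = (C * J * C⁻¹)ᵀ * (C * J * C⁻¹) := by
  simp only [transpose_mul, transpose_nonsing_inv, Matrix.mul_assoc]

theorem jacobian_mulVec {n : ℕ} (f : (Fin n → ℝ) → (Fin n → ℝ)) (x v : Fin n → ℝ) :
    jacobian f x *ᵥ v = fderiv ℝ f x v := by
  rw [jacobian, ← toLin'_apply, toLin'_toMatrix']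
  rfl

theorem exists_mem_Icc_map_sub_eq_map_fderiv {E F : Type*} [NormedAddCommGroup E]
    [NormedSpace ℝ E] [NormedAddCommGroup F] [NormedSpace ℝ F] {f : E → F}
    (hf : Differentiable ℝ f) (ℓ : F →L[ℝ] ℝ) (x y : E) :
    ∃ ω ∈ Set.Icc (0 : ℝ) 1, ℓ (f x - f y) = ℓ (fderiv ℝ f (ω • x + (1 - ω) • y) (x - y)) := by
  obtain ⟨z, hz, hmvt⟩ := domain_mvt (f := ℓ ∘ f) (s := Set.univ) (x := y) (y := x)
    (fun z _ => (ℓ.hasFDerivAt.comp z (hf z).hasFDerivAt).hasFDerivWithinAt)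
    convex_univ trivial trivial
  rw [segment_eq_image] at hz
  obtain ⟨ω, hω, rfl⟩ := hz
  refine ⟨ω, hω, ?_⟩
  simpa [map_sub, add_comm] using hmvt

theorem discrepancy_Mnorm_general {n : ℕ} (M C : Matrix (Fin n) (Fin n) ℝ)
    (hC : IsUnit C.det) (hCM : Cᵀ * C = M)
    (f : (Fin n → ℝ) → (Fin n → ℝ)) (hf : ContDiff ℝ 1 f) (x₀ y₀ : Fin n → ℝ) :
    ∃ ω ∈ Set.Icc (0 : ℝ) 1,
      Mnorm M (f x₀ - f y₀) ≤
        Real.sqrt (lambdaMax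
            ((Cᵀ)⁻¹ * (jacobian f (ω • x₀ + (1 - ω) • y₀))ᵀ * M *
              jacobian f (ω • x₀ + (1 - ω) • y₀) * C⁻¹)) *
          Mnorm M (x₀ - y₀) := by
  set u := C *ᵥ (f x₀ - f y₀)
  obtain ⟨ω, hω, hmvt⟩ := exists_mem_Icc_map_sub_eq_map_fderiv (hf.differentiable one_ne_zero)
    (dotProductBilin ℝ ℝ (u ᵥ* C)).toContinuousLinearMap x₀ y₀
  refine ⟨ω, hω, ?_⟩
  set J := jacobian f (ω • x₀ + (1 - ω) • y₀)
  set A := C * J * C⁻¹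
  have hAC : A *ᵥ (C *ᵥ (x₀ - y₀)) = C *ᵥ (J *ᵥ (x₀ - y₀)) := by
    simp only [A, mulVec_mulVec, Matrix.mul_assoc, nonsing_inv_mul C hC, Matrix.mul_one]
  have hu : u ⬝ᵥ u = u ⬝ᵥ (A *ᵥ (C *ᵥ (x₀ - y₀))) := by
    rw [hAC]
    simpa only [LinearMap.coe_toContinuousLinearMap', dotProductBilin_apply_apply,
      ← jacobian_mulVec, ← dotProduct_mulVec] using hmvt
  rw [Mnorm_eq_sqrt_dotProduct_mulVec hCM, Mnorm_eq_sqrt_dotProduct_mulVec hCM, ← hCM,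
    transpose_inv_mul_transpose_mul_mul_mul_inv]
  exact (sqrt_dotProduct_self_le_of_dotProduct_self_le hu.le).trans
    (sqrt_dotProduct_mulVec_self_le A _)

/-- discrepancy bound in a weighted `M`-norm. -/
theorem discrepancy_Mnorm {n : ℕ} (M C : Matrix (Fin n) (Fin n) ℝ)
    (hM : M.PosDef) (hC : IsUnit C.det) (hCM : Cᵀ * C = M)
    (f : (Fin n → ℝ) → (Fin n → ℝ)) (hf : ContDiff ℝ 1 f) (x₀ y₀ : Fin n → ℝ) :
    ∃ ω ∈ Set.Icc (0 : ℝ) 1,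
      Mnorm M (f x₀ - f y₀) ≤
        Real.sqrt (lambdaMax
            ((Cᵀ)⁻¹ * (jacobian f (ω • x₀ + (1 - ω) • y₀))ᵀ * M *
              jacobian f (ω • x₀ + (1 - ω) • y₀) * C⁻¹)) *
          Mnorm M (x₀ - y₀) :=
  discrepancy_Mnorm_general M C hC hCM f hf x₀ y₀
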